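/- arXiv:1010.4246 — 4 statements merged into one kernel-verified Lean document; each statement's English description precedes it below -/
import Mathlib

section
/- Let V be a real vector space, f : V → ℝ a linear functional, and δ, ζ ∈ V with δ ≠ ζ, f(δ) > 0, and f(ζ) > 0. Set S = {δ, −δ, ζ, −ζ}. If for every s ∈ S there exist a, b ∈ S with s + a + b = 0, then δ = 2ζ or ζ = 2δ. (This is the combinatorial content of the Corollary: for a flag manifold with exactly two isotropy summands, the set of T-roots has the form {±ζ, ±2ζ}.) -/
/-- Combinatorial content of the Corollary on two isotropy summands: if
`S = {δ, -δ, ζ, -ζ}` with `δ ≠ ζ` both positive for a linear functional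
`f`, and every element of `S` belongs to a zero-sum triple from `S`,
then `δ = 2ζ` or `ζ = 2δ`. -/
theorem two_summands_T_roots {V : Type*} [AddCommGroup V] [Module ℝ V]
    (f : V →ₗ[ℝ] ℝ) (δ ζ : V) (hne : δ ≠ ζ)
    (hfδ : 0 < f δ) (hfζ : 0 < f ζ)
    (S : Set V) (hS : S = {δ, -δ, ζ, -ζ})
    (htriple : ∀ s ∈ S, ∃ a ∈ S, ∃ b ∈ S, s + a + b = 0) :
    δ = (2 : ℝ) • ζ ∨ ζ = (2 : ℝ) • δ := by
  subst hS
  obtain ⟨a, ha, b, hb, h⟩ := htriple δ (by simp)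
  simp only [Set.mem_insert_iff, Set.mem_singleton_iff] at ha hb
  have hf := congrArg f h
  rcases ha with rfl | rfl | rfl | rfl <;> rcases hb with rfl | rfl | rfl | rfl <;>
    simp only [map_add, map_neg, map_zero] at hf <;>
    first
      | linarith
      | (left; linear_combination (norm := module) h)
      | (right; linear_combination (norm := module) -h)
end

section
/- Let V be a real vector space, f : V → ℝ a linear functional, and α, β, γ ∈ V pairwise distinct with f(α) > 0, f(β) > 0, f(γ) > 0. Set S = {α, −α, β, −β, γ, −γ}. If for every s ∈ S there exist a, b ∈ S with s + a + b = 0, then either there exist δ, ζ ∈ V with S = {δ, −δ, ζ, −ζ, δ+ζ, −(δ+ζ)}, or there exists δ ∈ V with S = {δ, −δ, 2δ, −2δ, 4δ, −4δ}. (This is the combinatorial content of the Corollary: for a flag manifold with three isotropy summands, R_T = {±δ, ±ζ, ±(δ+ζ)} or R_T = {±δ, ±2δ, ±4δ}.) -/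
section Aux

variable {V : Type*} [AddCommGroup V] [Module ℝ V]

lemma half_cancel {x y : V} (h : x + x + -(y + y) = 0) : x = y := by
  have h2 : (2 : ℝ) • x = (2 : ℝ) • y := by
    rw [two_smul, two_smul, ← sub_eq_zero, ← h]; abel1
  exact smul_right_injective V (by norm_num : (2 : ℝ) ≠ 0) h2

lemma half_cancel' {x y : V} (h : x + -(y + y) + x = 0) : x = y :=
  half_cancel (by rw [← h]; abel)

/-- Key step 1: a zero-sum triple for a maximal element `m` forces
`m = p + q`, `m = 2p` or `m = 2q`. -/
lemma key1 (f : V →ₗ[ℝ] ℝ) (p q m a b : V)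
    (hfp : 0 < f p) (hfq : 0 < f q) (hfm : 0 < f m)
    (h1 : f p ≤ f m) (h2 : f q ≤ f m)
    (ha : a ∈ ({p, -p, q, -q, m, -m} : Set V))
    (hb : b ∈ ({p, -p, q, -q, m, -m} : Set V))
    (h : m + a + b = 0) : m = p + q ∨ m = p + p ∨ m = q + q := by
  simp only [Set.mem_insert_iff, Set.mem_singleton_iff] at ha hb
  rcases ha with rfl | rfl | rfl | rfl | rfl | rfl <;>
    rcases hb with rfl | rfl | rfl | rfl | rfl | rfl <;>
    (try (have hf := congrArg f h; simp only [map_add, map_neg, map_zero] at hf)) <;>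
    first
      | linarith
      | (left; rw [← sub_eq_zero, ← h]; abel1)
      | (left; rw [← sub_eq_zero, ← neg_eq_zero, ← h]; abel1)
      | (right; left; rw [← sub_eq_zero, ← h]; abel1)
      | (right; left; rw [← sub_eq_zero, ← neg_eq_zero, ← h]; abel1)
      | (right; right; rw [← sub_eq_zero, ← h]; abel1)
      | (right; right; rw [← sub_eq_zero, ← neg_eq_zero, ← h]; abel1)

/-- Key step 2: if `S = {±p, ±q, ±2p}`, then the zero-sum triple for `q`
forces `p = 2q`. -/
lemma key2 (f : V →ₗ[ℝ] ℝ) (p q a b : V)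
    (hfp : 0 < f p) (hfq : 0 < f q) (h2 : f q ≤ f p + f p)
    (hpq : p ≠ q) (hqm : q ≠ p + p)
    (ha : a ∈ ({p, -p, q, -q, p + p, -(p + p)} : Set V))
    (hb : b ∈ ({p, -p, q, -q, p + p, -(p + p)} : Set V))
    (h : q + a + b = 0) : p = q + q := by
  simp only [Set.mem_insert_iff, Set.mem_singleton_iff] at ha hb
  rcases ha with rfl | rfl | rfl | rfl | rfl | rfl <;>
    rcases hb with rfl | rfl | rfl | rfl | rfl | rfl <;>
    (try (have hf := congrArg f h; simp only [map_add, map_neg, map_zero] at hf)) <;>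
    first
      | linarith
      | (rw [← sub_eq_zero, ← h]; abel1)
      | (rw [← sub_eq_zero, ← neg_eq_zero, ← h]; abel1)
      | (exact absurd (by rw [← sub_eq_zero, ← h]; abel1) hpq)
      | (exact absurd (by rw [← sub_eq_zero, ← neg_eq_zero, ← h]; abel1) hpq)
      | (exact absurd (by rw [← sub_eq_zero, ← h]; abel1) hpq.symm)
      | (exact absurd (by rw [← sub_eq_zero, ← neg_eq_zero, ← h]; abel1) hpq.symm)
      | (exact absurd (by rw [← sub_eq_zero, ← h]; abel1) hqm)
      | (exact absurd (by rw [← sub_eq_zero, ← neg_eq_zero, ← h]; abel1) hqm)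
      | (exact absurd (half_cancel h) hpq.symm)
      | (exact absurd (half_cancel' h) hpq.symm)

/-- Handles the case `S = {±p, ±q, ±2p}`. -/
lemma helper2 (f : V →ₗ[ℝ] ℝ) (p q : V)
    (hpq : p ≠ q) (hqm : q ≠ p + p)
    (hfp : 0 < f p) (hfq : 0 < f q) (h2 : f q ≤ f p + f p)
    (htriple : ∀ s ∈ ({p, -p, q, -q, p + p, -(p + p)} : Set V),
      ∃ a ∈ ({p, -p, q, -q, p + p, -(p + p)} : Set V),
        ∃ b ∈ ({p, -p, q, -q, p + p, -(p + p)} : Set V), s + a + b = 0) :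
    ∃ δ : V, ({p, -p, q, -q, p + p, -(p + p)} : Set V) =
      {δ, -δ, (2 : ℝ) • δ, -((2 : ℝ) • δ), (4 : ℝ) • δ, -((4 : ℝ) • δ)} := by
  obtain ⟨a, ha, b, hb, h⟩ := htriple q (by simp)
  have hp : p = q + q := key2 f p q a b hfp hfq h2 hpq hqm ha hb h
  subst hp
  refine ⟨q, ?_⟩
  have e2 : (2 : ℝ) • q = q + q := two_smul ℝ q
  have e4 : (4 : ℝ) • q = q + q + (q + q) := by module
  rw [e2, e4]
  ext x
  simp only [Set.mem_insert_iff, Set.mem_singleton_iff]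
  tauto

lemma main_helper (f : V →ₗ[ℝ] ℝ) (p q m : V)
    (hpq : p ≠ q) (hpm : p ≠ m) (hqm : q ≠ m)
    (hfp : 0 < f p) (hfq : 0 < f q) (hfm : 0 < f m)
    (h1 : f p ≤ f m) (h2 : f q ≤ f m)
    (htriple : ∀ s ∈ ({p, -p, q, -q, m, -m} : Set V),
      ∃ a ∈ ({p, -p, q, -q, m, -m} : Set V),
        ∃ b ∈ ({p, -p, q, -q, m, -m} : Set V), s + a + b = 0) :
    (∃ δ ζ : V, ({p, -p, q, -q, m, -m} : Set V)
        = {δ, -δ, ζ, -ζ, δ + ζ, -(δ + ζ)}) ∨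
      (∃ δ : V, ({p, -p, q, -q, m, -m} : Set V) = {δ, -δ, (2 : ℝ) • δ,
        -((2 : ℝ) • δ), (4 : ℝ) • δ, -((4 : ℝ) • δ)}) := by
  obtain ⟨a, ha, b, hb, h⟩ := htriple m (by simp)
  rcases key1 f p q m a b hfp hfq hfm h1 h2 ha hb h with hm | hm | hm
  · subst hm
    exact Or.inl ⟨p, q, rfl⟩
  · subst hm
    right
    refine helper2 f p q hpq hqm hfp hfq ?_ htriple
    simpa using h2
  · subst hm
    have hT : ({p, -p, q, -q, q + q, -(q + q)} : Set V)
        = ({q, -q, p, -p, q + q, -(q + q)} : Set V) := by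
      ext x
      simp only [Set.mem_insert_iff, Set.mem_singleton_iff]
      tauto
    rw [hT] at htriple ⊢
    right
    refine helper2 f q p hpq.symm hpm hfq hfp ?_ htriple
    simpa using h1

end Aux

/-- Combinatorial content of the Corollary on three isotropy summands: if
`S = {α, -α, β, -β, γ, -γ}` with `α, β, γ` pairwise distinct and positive
for a linear functional `f`, and every element of `S` belongs to a
zero-sum triple from `S`, then `S = {±δ, ±ζ, ±(δ+ζ)}` for some `δ, ζ`, or
`S = {±δ, ±2δ, ±4δ}` for some `δ`. -/
theorem three_summands_T_roots {V : Type*} [AddCommGroup V] [Module ℝ V]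
    (f : V →ₗ[ℝ] ℝ) (α β γ : V)
    (hab : α ≠ β) (hac : α ≠ γ) (hbc : β ≠ γ)
    (hfα : 0 < f α) (hfβ : 0 < f β) (hfγ : 0 < f γ)
    (S : Set V) (hS : S = {α, -α, β, -β, γ, -γ})
    (htriple : ∀ s ∈ S, ∃ a ∈ S, ∃ b ∈ S, s + a + b = 0) :
    (∃ δ ζ : V, S = {δ, -δ, ζ, -ζ, δ + ζ, -(δ + ζ)}) ∨
      (∃ δ : V, S = {δ, -δ, (2 : ℝ) • δ, -((2 : ℝ) • δ),
        (4 : ℝ) • δ, -((4 : ℝ) • δ)}) := by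
  rcases le_total (f α) (f β) with h1 | h1
  · rcases le_total (f β) (f γ) with h2 | h2
    · -- max is γ
      have hST : S = ({α, -α, β, -β, γ, -γ} : Set V) := hS
      rw [hST] at htriple ⊢
      exact main_helper f α β γ hab hac hbc hfα hfβ hfγ (h1.trans h2) h2 htriple
    · -- max is β
      have hST : S = ({α, -α, γ, -γ, β, -β} : Set V) := by
        rw [hS]; ext x
        simp only [Set.mem_insert_iff, Set.mem_singleton_iff]
        tauto
      rw [hST] at htriple ⊢
      exact main_helper f α γ β hac hab hbc.symm hfα hfγ hfβ h1 h2 htriple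
  · rcases le_total (f α) (f γ) with h2 | h2
    · -- max is γ
      have hST : S = ({α, -α, β, -β, γ, -γ} : Set V) := hS
      rw [hST] at htriple ⊢
      exact main_helper f α β γ hab hac hbc hfα hfβ hfγ h2 (h1.trans h2) htriple
    · -- max is α
      have hST : S = ({β, -β, γ, -γ, α, -α} : Set V) := by
        rw [hS]; ext x
        simp only [Set.mem_insert_iff, Set.mem_singleton_iff]
        tauto
      rw [hST] at htriple ⊢
      exact main_helper f β γ α hbc hab.symm hac.symm hfβ hfγ hfα h1 h2 htriple
end

section
/- Let a₁, a₂, c₁, d₁, d₂ ∈ ℂ and set b₁ = −conj(a₁), b₂ = −conj(a₂), c₂ = −conj(c₁). Then the system of equations b₂c₁ = 0, c₂d₁ = 0, b₁c₁ = 0, c₂d₂ = 0, b₁d₁ + b₂d₂ = 0, a₁c₁ = 0, a₂c₁ = 0 holds if and only if either (c₁ = 0 and conj(a₁)·d₁ + conj(a₂)·d₂ = 0) or (a₁ = 0, a₂ = 0, d₁ = 0, and d₂ = 0). -/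
open Complex

/-- The algebraic system characterizing equigeodesic vectors on
`G₂(α₁) = G₂/U(2)` (long root): with the reality constraints
`b₁ = -conj a₁`, `b₂ = -conj a₂`, `c₂ = -conj c₁`, the system
`b₂c₁ = 0`, `c₂d₁ = 0`, `b₁c₁ = 0`, `c₂d₂ = 0`, `b₁d₁ + b₂d₂ = 0`,
`a₁c₁ = 0`, `a₂c₁ = 0` holds iff `c₁ = 0` and
`conj a₁ * d₁ + conj a₂ * d₂ = 0`, or `a₁ = a₂ = d₁ = d₂ = 0`. -/
theorem g2_long_root_system (a₁ a₂ c₁ d₁ d₂ b₁ b₂ c₂ : ℂ)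
    (hb₁ : b₁ = -(starRingEnd ℂ) a₁) (hb₂ : b₂ = -(starRingEnd ℂ) a₂)
    (hc₂ : c₂ = -(starRingEnd ℂ) c₁) :
    (b₂ * c₁ = 0 ∧ c₂ * d₁ = 0 ∧ b₁ * c₁ = 0 ∧ c₂ * d₂ = 0 ∧
        b₁ * d₁ + b₂ * d₂ = 0 ∧ a₁ * c₁ = 0 ∧ a₂ * c₁ = 0) ↔
      ((c₁ = 0 ∧ (starRingEnd ℂ) a₁ * d₁ + (starRingEnd ℂ) a₂ * d₂ = 0) ∨
        (a₁ = 0 ∧ a₂ = 0 ∧ d₁ = 0 ∧ d₂ = 0)) := by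
  subst hb₁ hb₂ hc₂
  constructor
  · rintro ⟨h1, h2, h3, h4, h5, h6, h7⟩
    by_cases hc : c₁ = 0
    · left
      refine ⟨hc, ?_⟩
      have := h5
      linear_combination -h5
    · right
      have hcc : (starRingEnd ℂ) c₁ ≠ 0 := by simpa using hc
      have ha₁ : a₁ = 0 := by
        rcases mul_eq_zero.mp h6 with h | h
        · exact h
        · exact absurd h hc
      have ha₂ : a₂ = 0 := by
        rcases mul_eq_zero.mp h7 with h | h
        · exact h
        · exact absurd h hc
      have hd₁ : d₁ = 0 := by
        rcases mul_eq_zero.mp h2 with h | h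
        · exact absurd (neg_eq_zero.mp h) hcc
        · exact h
      have hd₂ : d₂ = 0 := by
        rcases mul_eq_zero.mp h4 with h | h
        · exact absurd (neg_eq_zero.mp h) hcc
        · exact h
      exact ⟨ha₁, ha₂, hd₁, hd₂⟩
  · rintro (⟨hc, hsum⟩ | ⟨h1, h2, h3, h4⟩)
    · subst hc
      refine ⟨by ring, by simp, by ring, by simp, ?_, by ring, by ring⟩
      linear_combination -hsum
    · subst h1 h2 h3 h4
      simp
end

section
/- Let L be a finite-dimensional complex semisimple Lie algebra with Cartan subalgebra H whose set of roots is exactly R = {±α₁, ±α₂, ±(α₁+α₂), ±(α₁+2α₂), ±(α₁+3α₂), ±(2α₁+3α₂)} for some linearly independent linear functionals α₁, α₂ on H (a root system of type G₂). Set n₁ = the direct sum of the root spaces g_γ over γ ∈ {±α₂, ±(α₁+α₂)}, n₂ = g_{α₁+2α₂} ⊕ g_{−(α₁+2α₂)}, and n₃ = the direct sum of the root spaces g_γ over γ ∈ {±(α₁+3α₂), ±(2α₁+3α₂)}. Then: (1) ⁅n₁, n₂⁆ ⊆ n₁ ⊕ n₃; (2) ⁅n₁, n₃⁆ ⊆ n₂;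 (3) ⁅n₂, n₃⁆ ⊆ n₁. -/
open LieAlgebra

variable {L : Type*} [LieRing L] [LieAlgebra ℂ L]

/-- The twelve roots of a root system of type `G₂` with simple roots
`α₁` (long) and `α₂` (short), as functionals on the Cartan subalgebra. -/
def g2RootSet {L : Type*} [LieRing L] [LieAlgebra ℂ L] (H : LieSubalgebra ℂ L)
    (α₁ α₂ : Module.Dual ℂ H) : Set (H → ℂ) :=
  {⇑α₁, ⇑(-α₁), ⇑α₂, ⇑(-α₂), ⇑(α₁ + α₂), ⇑(-(α₁ + α₂)),
    ⇑(α₁ + (2 : ℂ) • α₂), ⇑(-(α₁ + (2 : ℂ) • α₂)),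
    ⇑(α₁ + (3 : ℂ) • α₂), ⇑(-(α₁ + (3 : ℂ) • α₂)),
    ⇑((2 : ℂ) • α₁ + (3 : ℂ) • α₂), ⇑(-((2 : ℂ) • α₁ + (3 : ℂ) • α₂))}

/-- The set of roots of `(L, H)` is exactly the `G₂` root system generated
by the linearly independent functionals `α₁, α₂`. -/
def IsG2RootSystem {L : Type*} [LieRing L] [LieAlgebra ℂ L] (H : LieSubalgebra ℂ L)
    [LieRing.IsNilpotent H] (α₁ α₂ : Module.Dual ℂ H) : Prop :=
  LinearIndependent ℂ ![α₁, α₂] ∧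
    ∀ χ : H → ℂ, (χ ≠ 0 ∧ LieAlgebra.rootSpace H χ ≠ ⊥) ↔ χ ∈ g2RootSet H α₁ α₂

def g2Pairs : List (ℂ × ℂ) :=
  [(1,0),(-1,0),(0,1),(0,-1),(1,1),(-1,-1),(1,2),(-1,-2),(1,3),(-1,-3),(2,3),(-2,-3),(0,0)]

lemma g2_pair_eq {H : LieSubalgebra ℂ L} {α₁ α₂ : Module.Dual ℂ H}
    (hli : LinearIndependent ℂ ![α₁, α₂]) {a b c d : ℂ}
    (h : (⇑(a • α₁ + b • α₂) : H → ℂ) = ⇑(c • α₁ + d • α₂)) : a = c ∧ b = d := by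
  have h' : a • α₁ + b • α₂ = c • α₁ + d • α₂ := DFunLike.coe_injective h
  have h0 : (a - c) • α₁ + (b - d) • α₂ = 0 := by
    have h'' : (a - c) • α₁ + (b - d) • α₂ = (a • α₁ + b • α₂) - (c • α₁ + d • α₂) := by module
    rw [h'', h', sub_self]
  obtain ⟨h1, h2⟩ := LinearIndependent.pair_iff.mp hli _ _ h0
  exact ⟨sub_eq_zero.mp h1, sub_eq_zero.mp h2⟩

lemma g2_rootSpace_eq_bot {H : LieSubalgebra ℂ L} [LieRing.IsNilpotent H]
    {α₁ α₂ : Module.Dual ℂ H} (hG2 : IsG2RootSystem H α₁ α₂) (a b : ℂ)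
    (hab : (a, b) ∉ g2Pairs) :
    rootSpace H ⇑(a • α₁ + b • α₂) = ⊥ := by
  by_contra hbot
  have hne : (⇑(a • α₁ + b • α₂) : H → ℂ) ≠ 0 := by
    intro h0
    have h1 : a • α₁ + b • α₂ = 0 := DFunLike.coe_injective h0
    obtain ⟨ha, hb⟩ := LinearIndependent.pair_iff.mp hG2.1 a b h1
    exact hab (by simp [ha, hb, g2Pairs])
  have hmem := (hG2.2 _).mp ⟨hne, hbot⟩
  have recon : ∀ c d : ℂ, (c, d) ∈ g2Pairs →
      (⇑(a • α₁ + b • α₂) : H → ℂ) = ⇑(c • α₁ + d • α₂) → False := by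
    intro c d hcd h
    obtain ⟨hc, hd⟩ := g2_pair_eq hG2.1 h
    exact hab (hc ▸ hd ▸ hcd)
  simp only [g2RootSet, Set.mem_insert_iff, Set.mem_singleton_iff] at hmem
  rcases hmem with h|h|h|h|h|h|h|h|h|h|h|h
  · exact recon 1 0 (by simp [g2Pairs]) (h.trans (congrArg _ (by module)))
  · exact recon (-1) 0 (by simp [g2Pairs]) (h.trans (congrArg _ (by module)))
  · exact recon 0 1 (by simp [g2Pairs]) (h.trans (congrArg _ (by module)))
  · exact recon 0 (-1) (by simp [g2Pairs]) (h.trans (congrArg _ (by module)))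
  · exact recon 1 1 (by simp [g2Pairs]) (h.trans (congrArg _ (by module)))
  · exact recon (-1) (-1) (by simp [g2Pairs]) (h.trans (congrArg _ (by module)))
  · exact recon 1 2 (by simp [g2Pairs]) (h.trans (congrArg _ (by module)))
  · exact recon (-1) (-2) (by simp [g2Pairs]) (h.trans (congrArg _ (by module)))
  · exact recon 1 3 (by simp [g2Pairs]) (h.trans (congrArg _ (by module)))
  · exact recon (-1) (-3) (by simp [g2Pairs]) (h.trans (congrArg _ (by module)))
  · exact recon 2 3 (by simp [g2Pairs]) (h.trans (congrArg _ (by module)))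
  · exact recon (-2) (-3) (by simp [g2Pairs]) (h.trans (congrArg _ (by module)))

lemma g2_lie_mem_of_rootSpace_le {H : LieSubalgebra ℂ L} [LieRing.IsNilpotent H]
    {χ μ ν : Module.Dual ℂ H} {N : LieSubmodule ℂ H L} {x y : L}
    (hx : x ∈ rootSpace H ⇑χ) (hy : y ∈ rootSpace H ⇑μ)
    (hle : rootSpace H ⇑ν ≤ N) (hν : χ + μ = ν) : ⁅x, y⁆ ∈ N := by
  have h : (⇑χ + ⇑μ : H → ℂ) = ⇑ν := by rw [← hν]; ext z; simp
  exact hle (h ▸ lie_mem_genWeightSpace_of_mem_genWeightSpace hx hy)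

lemma g2_lie_mem_of_not_root {H : LieSubalgebra ℂ L} [LieRing.IsNilpotent H]
    {α₁ α₂ : Module.Dual ℂ H} (hG2 : IsG2RootSystem H α₁ α₂)
    {χ μ : Module.Dual ℂ H} {N : LieSubmodule ℂ H L} {x y : L}
    (hx : x ∈ rootSpace H ⇑χ) (hy : y ∈ rootSpace H ⇑μ) (a b c d : ℂ)
    (hχ : χ = a • α₁ + b • α₂) (hμ : μ = c • α₁ + d • α₂)
    (hab : (a + c, b + d) ∉ g2Pairs) : ⁅x, y⁆ ∈ N :=
  g2_lie_mem_of_rootSpace_le hx hy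
    (le_of_eq_of_le (g2_rootSpace_eq_bot hG2 _ _ hab) bot_le)
    (show χ + μ = (a + c) • α₁ + (b + d) • α₂ by rw [hχ, hμ]; module)

/-- Lemma: on the flag manifold `G₂(α₁)` (long root), the three isotropy
summands `n₁, n₂, n₃` satisfy `⁅n₁, n₂⁆ ⊆ n₁ ⊕ n₃`, `⁅n₁, n₃⁆ ⊆ n₂` and
`⁅n₂, n₃⁆ ⊆ n₁`. -/
theorem g2_long_bracket_inclusions {L : Type*} [LieRing L] [LieAlgebra ℂ L]
    [FiniteDimensional ℂ L] [LieAlgebra.IsSemisimple ℂ L]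
    (H : LieSubalgebra ℂ L) [H.IsCartanSubalgebra]
    (α₁ α₂ : Module.Dual ℂ H) (hG2 : IsG2RootSystem H α₁ α₂)
    (n₁ n₂ n₃ : LieSubmodule ℂ H L)
    (hn₁ : n₁ = rootSpace H ⇑α₂ ⊔ rootSpace H ⇑(-α₂) ⊔
      rootSpace H ⇑(α₁ + α₂) ⊔ rootSpace H ⇑(-(α₁ + α₂)))
    (hn₂ : n₂ = rootSpace H ⇑(α₁ + (2 : ℂ) • α₂) ⊔
      rootSpace H ⇑(-(α₁ + (2 : ℂ) • α₂)))
    (hn₃ : n₃ = rootSpace H ⇑(α₁ + (3 : ℂ) • α₂) ⊔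
      rootSpace H ⇑(-(α₁ + (3 : ℂ) • α₂)) ⊔
      rootSpace H ⇑((2 : ℂ) • α₁ + (3 : ℂ) • α₂) ⊔
      rootSpace H ⇑(-((2 : ℂ) • α₁ + (3 : ℂ) • α₂))) :
    (∀ x ∈ n₁, ∀ y ∈ n₂, ⁅x, y⁆ ∈ n₁ ⊔ n₃) ∧
      (∀ x ∈ n₁, ∀ y ∈ n₃, ⁅x, y⁆ ∈ n₂) ∧
      (∀ x ∈ n₂, ∀ y ∈ n₃, ⁅x, y⁆ ∈ n₁) := by
  have hA : rootSpace H ⇑α₂ ≤ n₁ := by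
    rw [hn₁]; exact le_sup_of_le_left (le_sup_of_le_left le_sup_left)
  have hB : rootSpace H ⇑(-α₂) ≤ n₁ := by
    rw [hn₁]; exact le_sup_of_le_left (le_sup_of_le_left le_sup_right)
  have hC : rootSpace H ⇑(α₁ + α₂) ≤ n₁ := by
    rw [hn₁]; exact le_sup_of_le_left le_sup_right
  have hD : rootSpace H ⇑(-(α₁ + α₂)) ≤ n₁ := by rw [hn₁]; exact le_sup_right
  have hA2 : rootSpace H ⇑(α₁ + (2 : ℂ) • α₂) ≤ n₂ := by rw [hn₂]; exact le_sup_left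
  have hB2 : rootSpace H ⇑(-(α₁ + (2 : ℂ) • α₂)) ≤ n₂ := by rw [hn₂]; exact le_sup_right
  have hE : rootSpace H ⇑(α₁ + (3 : ℂ) • α₂) ≤ n₃ := by
    rw [hn₃]; exact le_sup_of_le_left (le_sup_of_le_left le_sup_left)
  have hF : rootSpace H ⇑(-(α₁ + (3 : ℂ) • α₂)) ≤ n₃ := by
    rw [hn₃]; exact le_sup_of_le_left (le_sup_of_le_left le_sup_right)
  have hG : rootSpace H ⇑((2 : ℂ) • α₁ + (3 : ℂ) • α₂) ≤ n₃ := by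
    rw [hn₃]; exact le_sup_of_le_left le_sup_right
  have hK : rootSpace H ⇑(-((2 : ℂ) • α₁ + (3 : ℂ) • α₂)) ≤ n₃ := by
    rw [hn₃]; exact le_sup_right
  refine ⟨?_, ?_, ?_⟩
  · intro x hx y hy
    rw [hn₁, LieSubmodule.mem_sup] at hx
    obtain ⟨u, hu, a4, ha4, rfl⟩ := hx
    rw [LieSubmodule.mem_sup] at hu
    obtain ⟨v, hv, a3, ha3, rfl⟩ := hu
    rw [LieSubmodule.mem_sup] at hv
    obtain ⟨a1, ha1, a2, ha2, rfl⟩ := hv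
    rw [hn₂, LieSubmodule.mem_sup] at hy
    obtain ⟨b1, hb1, b2, hb2, rfl⟩ := hy
    simp only [add_lie, lie_add]
    repeat' apply add_mem
    all_goals first
      | exact g2_lie_mem_of_rootSpace_le ha1 hb1 (hE.trans le_sup_right) (by module)
      | exact g2_lie_mem_of_rootSpace_le ha1 hb2 (hD.trans le_sup_left) (by module)
      | exact g2_lie_mem_of_rootSpace_le ha2 hb1 (hC.trans le_sup_left) (by module)
      | exact g2_lie_mem_of_rootSpace_le ha2 hb2 (hF.trans le_sup_right) (by module)
      | exact g2_lie_mem_of_rootSpace_le ha3 hb1 (hG.trans le_sup_right) (by module)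
      | exact g2_lie_mem_of_rootSpace_le ha3 hb2 (hB.trans le_sup_left) (by module)
      | exact g2_lie_mem_of_rootSpace_le ha4 hb1 (hA.trans le_sup_left) (by module)
      | exact g2_lie_mem_of_rootSpace_le ha4 hb2 (hK.trans le_sup_right) (by module)
  · intro x hx y hy
    rw [hn₁, LieSubmodule.mem_sup] at hx
    obtain ⟨u, hu, a4, ha4, rfl⟩ := hx
    rw [LieSubmodule.mem_sup] at hu
    obtain ⟨v, hv, a3, ha3, rfl⟩ := hu
    rw [LieSubmodule.mem_sup] at hv
    obtain ⟨a1, ha1, a2, ha2, rfl⟩ := hv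
    rw [hn₃, LieSubmodule.mem_sup] at hy
    obtain ⟨w, hw, c4, hc4, rfl⟩ := hy
    rw [LieSubmodule.mem_sup] at hw
    obtain ⟨s, hs, c3, hc3, rfl⟩ := hw
    rw [LieSubmodule.mem_sup] at hs
    obtain ⟨c1, hc1, c2, hc2, rfl⟩ := hs
    simp only [add_lie, lie_add]
    repeat' apply add_mem
    all_goals first
      | exact g2_lie_mem_of_rootSpace_le ha1 hc2 hB2 (by module)
      | exact g2_lie_mem_of_rootSpace_le ha2 hc1 hA2 (by module)
      | exact g2_lie_mem_of_rootSpace_le ha3 hc4 hB2 (by module)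
      | exact g2_lie_mem_of_rootSpace_le ha4 hc3 hA2 (by module)
      | exact g2_lie_mem_of_not_root hG2 ha1 hc1 0 1 1 3 (by module) (by module)
          (by norm_num [g2Pairs])
      | exact g2_lie_mem_of_not_root hG2 ha1 hc3 0 1 2 3 (by module) (by module)
          (by norm_num [g2Pairs])
      | exact g2_lie_mem_of_not_root hG2 ha1 hc4 0 1 (-2) (-3) (by module) (by module)
          (by norm_num [g2Pairs])
      | exact g2_lie_mem_of_not_root hG2 ha2 hc2 0 (-1) (-1) (-3) (by module) (by module)
          (by norm_num [g2Pairs])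
      | exact g2_lie_mem_of_not_root hG2 ha2 hc3 0 (-1) 2 3 (by module) (by module)
          (by norm_num [g2Pairs])
      | exact g2_lie_mem_of_not_root hG2 ha2 hc4 0 (-1) (-2) (-3) (by module) (by module)
          (by norm_num [g2Pairs])
      | exact g2_lie_mem_of_not_root hG2 ha3 hc1 1 1 1 3 (by module) (by module)
          (by norm_num [g2Pairs])
      | exact g2_lie_mem_of_not_root hG2 ha3 hc2 1 1 (-1) (-3) (by module) (by module)
          (by norm_num [g2Pairs])
      | exact g2_lie_mem_of_not_root hG2 ha3 hc3 1 1 2 3 (by module) (by module)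
          (by norm_num [g2Pairs])
      | exact g2_lie_mem_of_not_root hG2 ha4 hc1 (-1) (-1) 1 3 (by module) (by module)
          (by norm_num [g2Pairs])
      | exact g2_lie_mem_of_not_root hG2 ha4 hc2 (-1) (-1) (-1) (-3) (by module) (by module)
          (by norm_num [g2Pairs])
      | exact g2_lie_mem_of_not_root hG2 ha4 hc4 (-1) (-1) (-2) (-3) (by module) (by module)
          (by norm_num [g2Pairs])
  · intro x hx y hy
    rw [hn₂, LieSubmodule.mem_sup] at hx
    obtain ⟨b1, hb1, b2, hb2, rfl⟩ := hx
    rw [hn₃, LieSubmodule.mem_sup] at hy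
    obtain ⟨w, hw, c4, hc4, rfl⟩ := hy
    rw [LieSubmodule.mem_sup] at hw
    obtain ⟨s, hs, c3, hc3, rfl⟩ := hw
    rw [LieSubmodule.mem_sup] at hs
    obtain ⟨c1, hc1, c2, hc2, rfl⟩ := hs
    simp only [add_lie, lie_add]
    repeat' apply add_mem
    all_goals first
      | exact g2_lie_mem_of_rootSpace_le hb1 hc2 hB (by module)
      | exact g2_lie_mem_of_rootSpace_le hb1 hc4 hD (by module)
      | exact g2_lie_mem_of_rootSpace_le hb2 hc1 hA (by module)
      | exact g2_lie_mem_of_rootSpace_le hb2 hc3 hC (by module)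
      | exact g2_lie_mem_of_not_root hG2 hb1 hc1 1 2 1 3 (by module) (by module)
          (by norm_num [g2Pairs])
      | exact g2_lie_mem_of_not_root hG2 hb1 hc3 1 2 2 3 (by module) (by module)
          (by norm_num [g2Pairs])
      | exact g2_lie_mem_of_not_root hG2 hb2 hc2 (-1) (-2) (-1) (-3) (by module) (by module)
          (by norm_num [g2Pairs])
      | exact g2_lie_mem_of_not_root hG2 hb2 hc4 (-1) (-2) (-2) (-3) (by module) (by module)
          (by norm_num [g2Pairs])
end
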